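/- The Borsuk number of the flat n-torus Tⁿ is 3 for all n ≥ 1: Tⁿ can be partitioned into 3 sets of diameter strictly less than diam Tⁿ = √n/2, but not into 2 such sets. -/

import Mathlib

/-- The Euclidean (flat) distance on the torus `Tⁿ = ℝⁿ/ℤⁿ`. -/
noncomputable def torusDistN {n : ℕ} (u v : Fin n → AddCircle (1:ℝ)) : ℝ :=
  Real.sqrt (∑ i, ‖u i - v i‖ ^ 2)

/-- The diameter of a subset of the flat torus `Tⁿ`. -/
noncomputable def torusDiamN {n : ℕ} (F : Set (Fin n → AddCircle (1:ℝ))) : ℝ :=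
  sSup {d | ∃ u ∈ F, ∃ v ∈ F, d = torusDistN u v}

/-!
Each coordinate difference has norm at most `1/2` in `ℝ/ℤ`, with equality for the shift by
`(1/2, …, 1/2)`; this gives `diam Tⁿ = √n/2`. Cutting the first circle factor into three arcs
of length `1/3` yields three slabs in which the first coordinate differences are below `1/3`,
so their diameters are strictly smaller.

Conversely, restrict a cover by two sets to the diagonal circle `t ↦ (t, …, t)`, along which
distances are `√n` times distances in `ℝ/ℤ`. If neither set contains an antipodal pair
`x, x + 1/2`, then a point lies in the first set iff its antipode does not. By connectedness of
the circle the first set has points arbitrarily close to its complement, i.e. to antipodes of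
its own points, so it contains almost antipodal pairs.
-/

theorem exists_mem_notMem_dist_lt {X : Type*} [PseudoMetricSpace X] [PreconnectedSpace X]
    {A : Set X} (hA : A.Nonempty) (hAc : Aᶜ.Nonempty) {ε : ℝ} (hε : 0 < ε) :
    ∃ a ∈ A, ∃ b ∉ A, dist a b < ε := by
  obtain ⟨p, hpA, hpAc⟩ : (frontier A).Nonempty :=
    nonempty_frontier_iff.mpr ⟨hA, fun h => hAc.ne_empty (Set.compl_empty_iff.mpr h)⟩
  rw [← Set.mem_compl_iff, ← closure_compl] at hpAc
  obtain ⟨a, ha, hpa⟩ := Metric.mem_closure_iff.mp hpA (ε / 2) (half_pos hε)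
  obtain ⟨b, hb, hpb⟩ := Metric.mem_closure_iff.mp hpAc (ε / 2) (half_pos hε)
  refine ⟨a, ha, b, hb, ?_⟩
  calc dist a b ≤ dist p a + dist p b := dist_triangle_left a b p
    _ < ε := by linarith

namespace AddCircle

theorem norm_coe_le_abs (p x : ℝ) : ‖(x : AddCircle p)‖ ≤ |x| :=
  QuotientAddGroup.norm_mk_le_norm

theorem norm_sq_le_quarter (x : AddCircle (1:ℝ)) : ‖x‖ ^ 2 ≤ 1 / 4 := by
  have := norm_le_half_period (1:ℝ) (x := x) one_ne_zero
  rw [abs_one] at this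
  nlinarith [norm_nonneg x]

theorem exists_forall_lt_exists_lt_norm_sub_of_cover_two {p : ℝ}
    (B : Fin 2 → Set (AddCircle p)) (hB : ⋃ i, B i = Set.univ) :
    ∃ i, ∀ r < |p| / 2, ∃ x ∈ B i, ∃ y ∈ B i, r < ‖x - y‖ := by
  set h : AddCircle p := ((p / 2 : ℝ) : AddCircle p)
  have hcover (x : AddCircle p) : x ∈ B 0 ∨ x ∈ B 1 := by
    simpa [← hB, Fin.exists_fin_two] using Set.mem_univ x
  by_cases hanti : ∃ i, ∃ x ∈ B i, x + h ∈ B i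
  · obtain ⟨i, x, hx, hxh⟩ := hanti
    refine ⟨i, fun r hr => ⟨x + h, hxh, x, hx, ?_⟩⟩
    rwa [add_sub_cancel_left, norm_half_period_eq]
  push Not at hanti
  have hshift (x : AddCircle p) : x + h ∈ B 0 ↔ x ∉ B 0 := by
    have := hanti 0 x; have := hanti 1 x; have := hcover x; have := hcover (x + h)
    tauto
  refine ⟨0, fun r hr => ?_⟩
  have hne : (B 0).Nonempty ∧ (B 0)ᶜ.Nonempty := by
    by_cases h0 : (0 : AddCircle p) ∈ B 0
    · exact ⟨⟨0, h0⟩, ⟨h, by simpa using (hshift 0).not.mpr (not_not.mpr h0)⟩⟩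
    · exact ⟨⟨h, by simpa using (hshift 0).mpr h0⟩, ⟨0, h0⟩⟩
  obtain ⟨a, ha, b, hb, hab⟩ := exists_mem_notMem_dist_lt hne.1 hne.2 (sub_pos.mpr hr)
  refine ⟨a, ha, b + h, (hshift b).mpr hb, ?_⟩
  have := norm_sub_norm_le h (a - b)
  rw [norm_half_period_eq] at this
  rw [dist_eq_norm] at hab
  calc r < |p| / 2 - ‖a - b‖ := by linarith
    _ ≤ ‖h - (a - b)‖ := this
    _ = ‖a - (b + h)‖ := by rw [← norm_neg]; congr 1; abel

end AddCircle

/-- `circleArc m x = k` iff the representative of `x` in `[0, 1)` lies in `[k/m, (k+1)/m)`. -/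
noncomputable def circleArc (m : ℕ) [NeZero m] (x : AddCircle (1:ℝ)) : Fin m :=
  Fin.ofNat m ⌊m * (AddCircle.equivIco 1 0 x : ℝ)⌋₊

section CircleArc

variable {m : ℕ} [NeZero m]

theorem floor_mul_equivIco_lt (x : AddCircle (1:ℝ)) :
    ⌊m * (AddCircle.equivIco 1 0 x : ℝ)⌋₊ < m := by
  have hx := (AddCircle.equivIco 1 0 x).2
  have hm : (0 : ℝ) < m := by exact_mod_cast Nat.pos_of_neZero m
  rw [Nat.floor_lt (by nlinarith [hx.1])]
  nlinarith [hx.2]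

theorem norm_sub_lt_of_circleArc_eq {x y : AddCircle (1:ℝ)}
    (h : circleArc m x = circleArc m y) : ‖x - y‖ < 1 / m := by
  set a : ℝ := (AddCircle.equivIco 1 0 x : ℝ)
  set b : ℝ := (AddCircle.equivIco 1 0 y : ℝ)
  have hm : (0 : ℝ) < m := by exact_mod_cast Nat.pos_of_neZero m
  have ha := (AddCircle.equivIco 1 0 x).2
  have hb := (AddCircle.equivIco 1 0 y).2
  have hfloor : ⌊m * a⌋₊ = ⌊m * b⌋₊ := by
    simpa [circleArc, Fin.ext_iff, Nat.mod_eq_of_lt (floor_mul_equivIco_lt _)] using h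
  have hfa := (Nat.floor_eq_iff (by nlinarith [ha.1])).mp (rfl : ⌊m * a⌋₊ = _)
  have hfb := (Nat.floor_eq_iff (by nlinarith [hb.1])).mp hfloor.symm
  have hab : |a - b| < 1 / m := by
    rw [abs_sub_lt_iff, lt_div_iff₀ hm, lt_div_iff₀ hm]
    constructor <;> nlinarith
  calc ‖x - y‖ = ‖((a - b : ℝ) : AddCircle (1:ℝ))‖ := by
        rw [AddCircle.coe_sub, AddCircle.coe_equivIco, AddCircle.coe_equivIco]
    _ ≤ |a - b| := AddCircle.norm_coe_le_abs 1 _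
    _ < 1 / m := hab

end CircleArc

theorem torusDistN_le_sqrt_sum {n : ℕ} {u v : Fin n → AddCircle (1:ℝ)} {c : Fin n → ℝ}
    (h : ∀ i, ‖u i - v i‖ ^ 2 ≤ c i) : torusDistN u v ≤ √(∑ i, c i) :=
  Real.sqrt_le_sqrt (Finset.sum_le_sum fun i _ => h i)

theorem torusDistN_eq_of_forall_sub_eq {n : ℕ} {u v : Fin n → AddCircle (1:ℝ)}
    {c : AddCircle (1:ℝ)} (h : ∀ i, u i - v i = c) : torusDistN u v = √n * ‖c‖ := by
  simp [torusDistN, h, Real.sqrt_mul (Nat.cast_nonneg n)]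

theorem sqrt_div_four (x : ℝ) : √(x / 4) = √x / 2 := by
  rw [Real.sqrt_div' x (by norm_num), show (4:ℝ) = 2 ^ 2 by norm_num, Real.sqrt_sq zero_le_two]

theorem torusDistN_le {n : ℕ} (u v : Fin n → AddCircle (1:ℝ)) : torusDistN u v ≤ √n / 2 :=
  calc torusDistN u v ≤ √(∑ _i : Fin n, (1 / 4 : ℝ)) :=
        torusDistN_le_sqrt_sum fun i => AddCircle.norm_sq_le_quarter (u i - v i)
    _ = √n / 2 := by
      rw [Finset.sum_const, Finset.card_univ, Fintype.card_fin, nsmul_eq_mul, mul_one_div,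
        sqrt_div_four]

theorem torusDistN_le_torusDiamN {n : ℕ} {F : Set (Fin n → AddCircle (1:ℝ))} {u v}
    (hu : u ∈ F) (hv : v ∈ F) : torusDistN u v ≤ torusDiamN F :=
  le_csSup ⟨√n / 2, by rintro _ ⟨u, -, v, -, rfl⟩; exact torusDistN_le u v⟩
    ⟨u, hu, v, hv, rfl⟩

theorem torusDiamN_le {n : ℕ} {F : Set (Fin n → AddCircle (1:ℝ))} {d : ℝ} (hd : 0 ≤ d)
    (h : ∀ u ∈ F, ∀ v ∈ F, torusDistN u v ≤ d) : torusDiamN F ≤ d :=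
  Real.sSup_le (by rintro _ ⟨u, hu, v, hv, rfl⟩; exact h u hu v hv) hd

theorem torusDiamN_nonneg {n : ℕ} (F : Set (Fin n → AddCircle (1:ℝ))) : 0 ≤ torusDiamN F :=
  Real.sSup_nonneg (by rintro _ ⟨u, -, v, -, rfl⟩; exact Real.sqrt_nonneg _)

theorem torusDistN_add_half {n : ℕ} (x : Fin n → AddCircle (1:ℝ)) :
    torusDistN x (x + fun _ => ((1 / 2 : ℝ) : AddCircle (1:ℝ))) = √n / 2 := by
  rw [torusDistN_eq_of_forall_sub_eq (c := -((1 / 2 : ℝ) : AddCircle (1:ℝ))) fun i => by simp,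
    norm_neg, AddCircle.norm_half_period_eq, abs_one, mul_one_div]

theorem torusDiamN_univ (n : ℕ) :
    torusDiamN (Set.univ : Set (Fin n → AddCircle (1:ℝ))) = √n / 2 :=
  le_antisymm (torusDiamN_le (by positivity) fun u _ v _ => torusDistN_le u v)
    ((torusDistN_add_half 0).symm.le.trans (torusDistN_le_torusDiamN trivial trivial))

def torusSlab (m : ℕ) [NeZero m] {n : ℕ} (i : Fin n) (k : Fin m) :
    Set (Fin n → AddCircle (1:ℝ)) :=
  (fun u => circleArc m (u i)) ⁻¹' {k}

section TorusSlab

variable {m n : ℕ} [NeZero m] (i : Fin n)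

theorem iUnion_torusSlab : ⋃ k, torusSlab m i k = Set.univ := by
  ext u
  simp [torusSlab]

theorem pairwise_disjoint_torusSlab : Pairwise (Function.onFun Disjoint (torusSlab m i)) :=
  pairwise_disjoint_fiber _

theorem torusDistN_le_of_mem_torusSlab {k : Fin m} {u v : Fin n → AddCircle (1:ℝ)}
    (hu : u ∈ torusSlab m i k) (hv : v ∈ torusSlab m i k) :
    torusDistN u v ≤ √((n - 1) / 4 + 1 / m ^ 2) := by
  let c (j : Fin n) : ℝ := 1 / 4 - if j = i then 1 / 4 - 1 / (m : ℝ) ^ 2 else 0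
  refine (torusDistN_le_sqrt_sum (c := c) fun j => ?_).trans_eq ?_
  · simp only [c]
    split_ifs with hj
    · subst hj
      have := norm_sub_lt_of_circleArc_eq (hu.trans hv.symm)
      rw [sub_sub_cancel, one_div, ← inv_pow, ← one_div]
      exact pow_le_pow_left₀ (norm_nonneg _) this.le 2
    · simpa using AddCircle.norm_sq_le_quarter (u j - v j)
  · congr 1
    simp only [c, Finset.sum_sub_distrib, Finset.sum_const, Finset.card_univ, Fintype.card_fin,
      nsmul_eq_mul, Finset.sum_ite_eq', Finset.mem_univ, if_true]
    ring

theorem torusDiamN_torusSlab_lt (hm : 2 < m) (k : Fin m) :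
    torusDiamN (torusSlab m i k) < √n / 2 := by
  have hn : (1 : ℝ) ≤ n := by exact_mod_cast i.pos
  have hm' : (2 : ℝ) < m := by exact_mod_cast hm
  have hm2 : 1 / (m : ℝ) ^ 2 < 1 / 4 := by
    rw [one_div_lt_one_div (by positivity) (by norm_num)]; nlinarith
  have hm2' : 0 < 1 / (m : ℝ) ^ 2 := by positivity
  calc torusDiamN (torusSlab m i k) ≤ √((n - 1) / 4 + 1 / m ^ 2) :=
        torusDiamN_le (Real.sqrt_nonneg _) fun _ hu _ hv => torusDistN_le_of_mem_torusSlab i hu hv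
    _ < √(n / 4) := Real.sqrt_lt_sqrt (by linarith) (by linarith)
    _ = √n / 2 := sqrt_div_four n

end TorusSlab

theorem exists_sqrt_div_two_le_torusDiamN_of_cover_two {n : ℕ}
    (F : Fin 2 → Set (Fin n → AddCircle (1:ℝ))) (hF : ⋃ i, F i = Set.univ) :
    ∃ i, √n / 2 ≤ torusDiamN (F i) := by
  let diag : AddCircle (1:ℝ) → Fin n → AddCircle (1:ℝ) := fun x _ => x
  obtain ⟨i, hi⟩ := AddCircle.exists_forall_lt_exists_lt_norm_sub_of_cover_two
    (fun i => diag ⁻¹' F i) (by rw [← Set.preimage_iUnion, hF, Set.preimage_univ])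
  refine ⟨i, le_of_forall_lt fun c hc => ?_⟩
  obtain hn | hn := (Real.sqrt_nonneg n).eq_or_lt
  · exact hc.trans_le (by rw [← hn, zero_div]; exact torusDiamN_nonneg _)
  obtain ⟨x, hx, y, hy, hxy⟩ := hi (c / √n) (by rw [abs_one, div_lt_iff₀ hn]; linarith)
  calc c < √n * ‖x - y‖ := by rwa [div_lt_iff₀' hn] at hxy
    _ = torusDistN (diag x) (diag y) := (torusDistN_eq_of_forall_sub_eq fun _ => rfl).symm
    _ ≤ torusDiamN (F i) := torusDistN_le_torusDiamN hx hy

theorem torus_borsuk_number_three (n : ℕ) (hn : 1 ≤ n) :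
    torusDiamN (Set.univ : Set (Fin n → AddCircle (1:ℝ))) = Real.sqrt n / 2 ∧
    (∃ F : Fin 3 → Set (Fin n → AddCircle (1:ℝ)),
        (⋃ i, F i) = Set.univ ∧
        Pairwise (Function.onFun Disjoint F) ∧
        ∀ i, torusDiamN (F i) < Real.sqrt n / 2) ∧
    (∀ F : Fin 2 → Set (Fin n → AddCircle (1:ℝ)),
        (⋃ i, F i) = Set.univ →
        ∃ i, Real.sqrt n / 2 ≤ torusDiamN (F i)) :=
  let i : Fin n := ⟨0, hn⟩
  ⟨torusDiamN_univ n,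
    ⟨torusSlab 3 i, iUnion_torusSlab i, pairwise_disjoint_torusSlab i,
      torusDiamN_torusSlab_lt i (by norm_num)⟩,
    exists_sqrt_div_two_le_torusDiamN_of_cover_two⟩
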